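/- arXiv:2005.04759 — 4 statements merged into one kernel-verified Lean document; each statement's English description precedes it below -/
import Mathlib

section
/- Let n be a positive integer, z a positive integer, and y = (y_1,...,y_n) a vector of positive integers (car lengths). If c = (c_1,...,c_n) is a parking sequence for (y; z) (i.e., all n cars park successfully on a street of z-1+y_1+...+y_n spots with the first z-1 occupied by a trailer), then the number of indices j with c_j ≤ z is at least 1, and for each 1 ≤ t ≤ n-1, the number of indices j with c_j ≤ z + (sum of the t largest entries of y) is at least t+1. -/
/-!
In a successful parking the trailer and the cars tile the street `1, …, z - 1 + ∑ y` exactly,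
and every car parks at or after its preferred spot. Let `S` be the sum of the `t` largest
lengths. The `S + 1` spots `z, …, z + S` are covered by cars that start at or before `z + S`;
since any `t` cars have total length at most `S`, there are at least `t + 1` such cars, and each
of them prefers a spot `≤ z + S`. The first claim is the case `t = 0`.
-/

open Finset

/-- The first empty spot `j` with `c ≤ j ≤ M` (street spots are `1..M`). -/
def firstEmpty (occ : Finset ℕ) (M c : ℕ) : Option ℕ :=
  (List.range' c (M + 1 - c)).find? (fun j => decide (j ∉ occ))

/-- Park cars with preferences `cs` and lengths `ys` on a street with spots `1..M`,
where `occ` is the set of already-occupied spots.  Returns the list of starting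
spots of the cars (in order of entry) if all cars can park. -/
def parkAux (M : ℕ) : Finset ℕ → List ℕ → List ℕ → Option (List ℕ)
  | _, [], [] => some []
  | occ, c :: cs, y :: ys =>
    match firstEmpty occ M c with
    | none => none
    | some j =>
      if (∀ i ∈ Finset.Ico j (j + y), i ∉ occ) ∧ j + y - 1 ≤ M then
        (parkAux M (occ ∪ Finset.Ico j (j + y)) cs ys).map (j :: ·)
      else none
  | _, _, _ => none

/-- Outcome of the parking process for length vector `ys`, preference sequence `cs`,
and trailer parameter `z` (the trailer occupies spots `1,…,z-1`); the street has
`z - 1 + ys.sum` spots. -/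
def parkResult (ys cs : List ℕ) (z : ℕ) : Option (List ℕ) :=
  parkAux (z - 1 + ys.sum) (Finset.Ico 1 z) cs ys

/-- `cs` is a parking sequence for `(ys; z)`. -/
def IsParkingSeq (ys cs : List ℕ) (z : ℕ) : Prop :=
  cs.length = ys.length ∧ (∀ c ∈ cs, 1 ≤ c) ∧ (parkResult ys cs z).isSome = true

/-- Starting spots of the standard (no-gap, in order) final configuration. -/
def standardStarts (z : ℕ) : List ℕ → List ℕ
  | [] => []
  | y :: ys => z :: standardStarts (z + y) ys

/-- `cs` parks `ys` in the standard order `T, C₁, …, Cₙ`. -/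
def ParksStandard (ys cs : List ℕ) (z : ℕ) : Prop :=
  parkResult ys cs z = some (standardStarts z ys)

/-- `cs` is a permutation-invariant parking sequence for `(ys; z)`. -/
def PermInvariant (ys cs : List ℕ) (z : ℕ) : Prop :=
  ∀ cs' : List ℕ, cs'.Perm cs → IsParkingSeq ys cs' z

/-- `cs` is a strong parking sequence for `{ys; z}`. -/
def StrongParkingSeq (ys cs : List ℕ) (z : ℕ) : Prop :=
  ∀ ys' : List ℕ, ys'.Perm ys → IsParkingSeq ys' cs z

/-- The nondecreasing rearrangement (order statistics) of a list. -/
def orderStats (l : List ℕ) : List ℕ :=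
  Multiset.sort (l : Multiset ℕ) (· ≤ ·)

/-- `xs` is a `u`-parking function. -/
def IsUPF (u xs : List ℕ) : Prop :=
  xs.length = u.length ∧ (∀ x ∈ xs, 1 ≤ x) ∧
    ∀ i < u.length, (orderStats xs).getD i 0 ≤ u.getD i 0


theorem List.Sublist.sum_le_sum_take {R s : List ℕ} (hs : s.Sublist R) (hR : R.Pairwise (· ≥ ·))
    {t : ℕ} (ht : s.length ≤ t) : s.sum ≤ (R.take t).sum := by
  induction R generalizing s t with
  | nil => simp [List.sublist_nil.mp hs]
  | cons a R ih =>
    obtain ⟨ha, hR⟩ := List.pairwise_cons.mp hR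
    obtain _ | t := t
    · simp [List.length_eq_zero_iff.mp (Nat.le_zero.mp ht)]
    rw [List.take_succ_cons, List.sum_cons]
    rcases List.sublist_cons_iff.mp hs with hs | ⟨s, rfl, hs'⟩
    · obtain _ | ⟨b, s⟩ := s
      · simp
      -- `b ≤ a`, and the rest of `s` is a sublist of `R` of length at most `t`
      have hb : b ≤ a := ha b (hs.subset List.mem_cons_self)
      have := ih ((List.sublist_cons_self b s).trans hs) hR (by simpa using ht)
      rw [List.sum_cons]
      omega
    · have := ih hs' hR (by simpa using ht)
      rw [List.sum_cons]
      omega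

theorem List.Forall₂.forall_mem_right {α β : Type*} {R : α → β → Prop} {p : α → Prop}
    {q : β → Prop} (hpq : ∀ a b, R a b → p a → q b) {l₁ : List α} {l₂ : List β}
    (h : List.Forall₂ R l₁ l₂) (hp : ∀ a ∈ l₁, p a) : ∀ b ∈ l₂, q b := by
  induction h with
  | nil => simp
  | cons hab _ ih => simp_all [hpq _ _ hab]

theorem List.Forall₂.countP_le_countP {α β : Type*} {R : α → β → Prop} {p : α → Bool}
    {q : β → Bool} (hpq : ∀ a b, R a b → q b → p a) {l₁ : List α} {l₂ : List β}
    (h : List.Forall₂ R l₁ l₂) : l₂.countP q ≤ l₁.countP p := by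
  induction h with
  | nil => rfl
  | @cons a b _ _ hab _ ih =>
    have := hpq a b hab
    grind

theorem perm_orderStats (l : List ℕ) : (orderStats l).Perm l := by
  rw [← Multiset.coe_eq_coe, orderStats, Multiset.sort_eq]

def topSum (l : List ℕ) (t : ℕ) : ℕ :=
  ((orderStats l).drop (l.length - t)).sum

theorem topSum_zero (l : List ℕ) : topSum l 0 = 0 := by
  simp [topSum, List.drop_eq_nil_of_le (perm_orderStats l).length_eq.le]

theorem List.Subperm.sum_le_topSum {s l : List ℕ} (hs : s.Subperm l) {t : ℕ}
    (ht : s.length ≤ t) : s.sum ≤ topSum l t := by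
  obtain ⟨s', hs's, hs'⟩ := (hs.trans (perm_orderStats l).symm.subperm).trans
    (List.reverse_perm _).symm.subperm
  have hsorted : (orderStats l).reverse.Pairwise (· ≥ ·) :=
    List.pairwise_reverse.mpr (Multiset.pairwise_sort _ _)
  have := hs'.sum_le_sum_take hsorted (hs's.length_eq ▸ ht)
  rwa [List.take_reverse, List.sum_reverse, (perm_orderStats l).length_eq, hs's.sum_eq] at this

theorem topSum_lt_sum {l : List ℕ} (hl : ∀ y ∈ l, 0 < y) {t : ℕ} (ht : t < l.length) :
    topSum l t < l.sum := by
  have hperm := perm_orderStats l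
  have hpos : 0 < ((orderStats l).take (l.length - t)).sum :=
    List.sum_pos _ (fun x hx => hl x (hperm.subset (List.mem_of_mem_take hx)))
      (List.length_pos_iff.mp (by simp [hperm.length_eq]; omega))
  have := List.sum_take_add_sum_drop (orderStats l) (l.length - t)
  rw [hperm.sum_eq] at this
  rw [topSum]
  omega

/-- Spots taken by cars given as `(start, length)` pairs. -/
def cover : List (ℕ × ℕ) → Finset ℕ
  | [] => ∅
  | p :: ps => Ico p.1 (p.1 + p.2) ∪ cover ps

theorem mem_cover {x : ℕ} {ps : List (ℕ × ℕ)} :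
    x ∈ cover ps ↔ ∃ p ∈ ps, x ∈ Ico p.1 (p.1 + p.2) := by
  induction ps with
  | nil => simp [cover]
  | cons p ps ih => simp [cover, ih]

theorem card_cover_le (ps : List (ℕ × ℕ)) : #(cover ps) ≤ (ps.map Prod.snd).sum := by
  induction ps with
  | nil => simp [cover]
  | cons p ps ih =>
    grw [cover, card_union_le, Nat.card_Ico, ih]
    simp

theorem subset_cover_filter {s : Finset ℕ} {ps : List (ℕ × ℕ)} {b : ℕ} (hs : s ⊆ cover ps)
    (hb : ∀ x ∈ s, x ≤ b) : s ⊆ cover (ps.filter (·.1 ≤ b)) := by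
  intro x hx
  obtain ⟨p, hp, hxp⟩ := mem_cover.mp (hs hx)
  have := hb x hx
  exact mem_cover.mpr ⟨p, List.mem_filter.mpr ⟨hp, by simp at hxp ⊢; omega⟩, hxp⟩

theorem le_of_firstEmpty_eq_some {occ : Finset ℕ} {M c j : ℕ} (h : firstEmpty occ M c = some j) :
    c ≤ j :=
  (List.mem_range'_1.mp (List.mem_of_find?_eq_some h)).1

/-- The cardinality identity says that the cars' intervals are pairwise disjoint and
disjoint from `occ`. -/
theorem parkAux_eq_some {M : ℕ} :
    ∀ {occ : Finset ℕ} {cs ys l : List ℕ}, parkAux M occ cs ys = some l →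
      List.Forall₂ (· ≤ ·) cs l ∧ l.length = ys.length ∧ (∀ p ∈ l.zip ys, p.1 + p.2 ≤ M + 1) ∧
        #(occ ∪ cover (l.zip ys)) = #occ + ys.sum
  | occ, [], [], l, h => by
    obtain rfl : [] = l := by simpa [parkAux] using h
    simp [cover]
  | occ, c :: cs, y :: ys, l, h => by
    rw [parkAux] at h
    rcases hj : firstEmpty occ M c with _ | j
    · simp [hj] at h
    simp only [hj] at h
    split_ifs at h with hfree
    obtain ⟨l, hl, rfl⟩ := Option.map_eq_some_iff.mp h
    obtain ⟨hle, hlen, hbound, hcard⟩ := parkAux_eq_some hl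
    refine ⟨.cons (le_of_firstEmpty_eq_some hj) hle, by simp [hlen], ?_, ?_⟩
    · simp only [List.zip_cons_cons, List.mem_cons, forall_eq_or_imp]
      exact ⟨by omega, hbound⟩
    · have hdisj : Disjoint occ (Ico j (j + y)) :=
        disjoint_right.mpr fun x hx => hfree.1 x hx
      rw [List.zip_cons_cons, cover, ← union_assoc, hcard, card_union_of_disjoint hdisj,
        Nat.card_Ico, List.sum_cons]
      omega
  | _, [], _ :: _, _, h | _, _ :: _, [], _, h => by simp [parkAux] at h

theorem IsParkingSeq.exists_tiling {ys cs : List ℕ} {z : ℕ} (h : IsParkingSeq ys cs z) :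
    ∃ l, List.Forall₂ (· ≤ ·) cs l ∧ l.length = ys.length ∧
      Ico 1 z ∪ cover (l.zip ys) = Icc 1 (z - 1 + ys.sum) := by
  obtain ⟨-, hcpos, hsome⟩ := h
  obtain ⟨l, hl⟩ := Option.isSome_iff_exists.mp hsome
  obtain ⟨hle, hlen, hbound, hcard⟩ := parkAux_eq_some hl
  have hlpos : ∀ j ∈ l, 1 ≤ j := hle.forall_mem_right (fun _ _ hcj hc => hc.trans hcj) hcpos
  refine ⟨l, hle, hlen, eq_of_subset_of_card_le ?_ (by simp [hcard])⟩
  intro x hx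
  simp only [mem_union, mem_Ico, mem_Icc, mem_cover] at hx ⊢
  rcases hx with hx | ⟨p, hp, hxp⟩
  · omega
  · have := hbound p hp
    have := hlpos p.1 (List.of_mem_zip hp).1
    omega

theorem IsParkingSeq.succ_le_countP_le_add_topSum {ys cs : List ℕ} {z : ℕ}
    (h : IsParkingSeq ys cs z) (hz : 0 < z) (hys : ∀ y ∈ ys, 0 < y) {t : ℕ}
    (ht : t < ys.length) : t + 1 ≤ cs.countP (· ≤ z + topSum ys t) := by
  set S := topSum ys t
  obtain ⟨l, hle, hlen, htiling⟩ := h.exists_tiling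
  have hSlt := topSum_lt_sum hys ht
  -- every spot of `[z, z + S]` is taken by a car that starts at or before `z + S`
  set early := (l.zip ys).filter (·.1 ≤ z + S)
  have hcovered : Icc z (z + S) ⊆ cover early := by
    refine subset_cover_filter (fun x hx => ?_) (fun x hx => (mem_Icc.mp hx).2)
    have hx' : x ∈ Ico 1 z ∪ cover (l.zip ys) := by
      rw [htiling]; simp only [mem_Icc] at hx ⊢; omega
    exact (mem_union.mp hx').resolve_left (by simp only [mem_Ico, mem_Icc] at hx ⊢; omega)
  have hlengths : (early.map Prod.snd).Subperm ys := by
    have : (early.map Prod.snd).Sublist ((l.zip ys).map Prod.snd) := List.filter_sublist.map _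
    exact (List.map_snd_zip hlen.ge ▸ this).subperm
  have hearly : t + 1 ≤ early.length := by
    by_contra! hshort
    have := hlengths.sum_le_topSum (t := t) (by simp only [List.length_map]; omega)
    have := (card_le_card hcovered).trans (card_cover_le early)
    simp only [Nat.card_Icc] at this
    omega
  calc t + 1 ≤ early.length := hearly
    _ = ((l.zip ys).map Prod.fst).countP (· ≤ z + S) := by
      rw [List.countP_map, List.countP_eq_length_filter]; rfl
    _ = l.countP (· ≤ z + S) := by rw [List.map_fst_zip hlen.le]
    _ ≤ cs.countP (· ≤ z + S) := hle.countP_le_countP fun c j hcj hj => by simp at hj ⊢; omega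

theorem stmt0 (n z : ℕ) (hn : 0 < n) (hz : 0 < z) (ys cs : List ℕ)
    (hylen : ys.length = n) (hypos : ∀ y ∈ ys, 0 < y)
    (hps : IsParkingSeq ys cs z) :
    1 ≤ cs.countP (fun c => decide (c ≤ z)) ∧
    ∀ t, 1 ≤ t → t ≤ n - 1 →
      t + 1 ≤ cs.countP (fun c => decide (c ≤ z + ((orderStats ys).drop (n - t)).sum)) := by
  subst hylen
  refine ⟨?_, fun t _ ht => hps.succ_le_countP_le_add_topSum hz hypos (by omega)⟩
  simpa [topSum_zero] using hps.succ_le_countP_le_add_topSum hz hypos hn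
end

section
/- Let y = (y_1,...,y_n) be a vector of positive integers and z a positive integer. A nondecreasing sequence c = (c_1 ≤ c_2 ≤ ... ≤ c_n) of positive integers is a parking sequence for (y; z) if and only if c_i ≤ z + y_1 + y_2 + ... + y_{i-1} for all i ∈ [n]. Moreover, in that case the final parking configuration is the trailer followed by C_1, C_2, ..., C_n in order with no gaps. -/
open Finset

/-! Behind the trailer the street fills up without gaps: if the cars before `C_i` occupy exactly
the spots `1, …, Z - 1`, where `Z = z + y_1 + ⋯ + y_{i-1}`, and `c_i ≤ Z`, then `C_i` parks at `Z`.
If instead `c_i > Z`, then by monotonicity all of `C_i, …, C_n` prefer spots after `Z`; as every car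
parks on free spots at or after its preference, they would need `y_i + ⋯ + y_n` spots after `Z`,
one more than the street has. -/

lemma firstEmpty_Ico_one {Z M c : ℕ} (hc : 1 ≤ c) (hcZ : c ≤ Z) (hZM : Z ≤ M) :
    firstEmpty (Ico 1 Z) M c = some Z := by
  obtain ⟨d, rfl⟩ := Nat.exists_eq_add_of_le hcZ
  have hsplit : List.range' c (M + 1 - c) =
      List.range' c d ++ (c + d) :: List.range' (c + d + 1) (M - (c + d)) := by
    rw [← List.range'_succ, List.range'_append_1]
    congr 1; omega
  rw [firstEmpty, hsplit, List.find?_append, List.find?_eq_none.2, Option.none_or,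
    List.find?_cons_of_pos]
  · simp
  · intro j hj
    simp only [List.mem_range'] at hj
    simp
    omega

lemma firstEmpty_eq_some {occ : Finset ℕ} {M c j : ℕ} (h : firstEmpty occ M c = some j) :
    c ≤ j ∧ j ≤ M := by
  have := List.mem_of_find?_eq_some h
  simp only [List.mem_range'] at this
  omega

lemma parkAux_cons_eq_some {M c y : ℕ} {occ : Finset ℕ} {cs ys l : List ℕ}
    (h : parkAux M occ (c :: cs) (y :: ys) = some l) :
    ∃ j l', firstEmpty occ M c = some j ∧ (∀ i ∈ Ico j (j + y), i ∉ occ) ∧ j + y - 1 ≤ M ∧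
      parkAux M (occ ∪ Ico j (j + y)) cs ys = some l' := by
  rw [parkAux] at h
  split at h
  · simp at h
  · split_ifs at h with hfit
    obtain ⟨l', hl', -⟩ := Option.map_eq_some_iff.1 h
    exact ⟨_, l', ‹_›, hfit.1, hfit.2, hl'⟩

lemma parkAux_Ico_one_cons {M Z c y : ℕ} (cs ys : List ℕ) (hc : 1 ≤ c) (hcZ : c ≤ Z)
    (hy : 0 < y) (hM : Z + y ≤ M + 1) :
    parkAux M (Ico 1 Z) (c :: cs) (y :: ys) = (parkAux M (Ico 1 (Z + y)) cs ys).map (Z :: ·) := by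
  have hfit : (∀ i ∈ Ico Z (Z + y), i ∉ Ico 1 Z) ∧ Z + y - 1 ≤ M :=
    ⟨fun i hi => by simp only [mem_Ico] at hi ⊢; omega, by omega⟩
  have hunion : Ico 1 Z ∪ Ico Z (Z + y) = Ico 1 (Z + y) :=
    Ico_union_Ico_eq_Ico (by omega) (by omega)
  rw [parkAux, firstEmpty_Ico_one hc hcZ (by omega)]
  simp only [if_pos hfit, hunion]

lemma sum_le_card_of_parkAux_eq_some {M a : ℕ} : ∀ {occ : Finset ℕ} {cs ys l : List ℕ},
    parkAux M occ cs ys = some l → (∀ c ∈ cs, a ≤ c) → ys.sum ≤ #(Ico a (M + 1) \ occ)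
  | _, [], [], _, _, _ => by simp
  | _, [], _ :: _, _, h, _ => by simp [parkAux] at h
  | _, _ :: _, [], _, h, _ => by simp [parkAux] at h
  | occ, c :: cs, y :: ys, _, h, hcs => by
    obtain ⟨j, l', hj, hfree, hfit, hpark⟩ := parkAux_cons_eq_some h
    obtain ⟨hcj, hjM⟩ := firstEmpty_eq_some hj
    have hac := hcs c List.mem_cons_self
    have hsub : Ico j (j + y) ⊆ Ico a (M + 1) \ occ := fun i hi => by
      simp only [mem_sdiff, mem_Ico] at hi ⊢
      exact ⟨by omega, hfree i (mem_Ico.2 hi)⟩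
    have ih := sum_le_card_of_parkAux_eq_some hpark
      fun c' hc' => hcs c' (List.mem_cons_of_mem _ hc')
    rw [← sup_eq_union, ← sdiff_sdiff_left] at ih
    rw [← card_sdiff_add_card_eq_card hsub, Nat.card_Ico, List.sum_cons]
    omega

lemma parkAux_Ico_one_eq_none {Z : ℕ} {cs ys : List ℕ} (hZ : 1 ≤ Z) (hsum : 0 < ys.sum)
    (hcs : ∀ c ∈ cs, Z < c) : parkAux (Z - 1 + ys.sum) (Ico 1 Z) cs ys = none := by
  refine Option.eq_none_iff_forall_ne_some.2 fun l h => ?_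
  have hfree := sum_le_card_of_parkAux_eq_some (a := Z + 1) h hcs
  have := card_le_card (sdiff_subset (s := Ico (Z + 1) (Z - 1 + ys.sum + 1)) (t := Ico 1 Z))
  rw [Nat.card_Ico] at this
  omega

lemma forall_getD_le_add_sum_take_cons_iff {Z c y : ℕ} {cs ys : List ℕ} :
    (∀ i < (y :: ys).length, (c :: cs).getD i 0 ≤ Z + ((y :: ys).take i).sum) ↔
      c ≤ Z ∧ ∀ i < ys.length, cs.getD i 0 ≤ Z + y + (ys.take i).sum := by
  rw [List.length_cons, Nat.forall_lt_succ_left]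
  simp [Nat.add_assoc]

theorem parkAux_Ico_one_eq_standardStarts : ∀ {Z : ℕ} {cs ys : List ℕ},
    cs.length = ys.length → (∀ y ∈ ys, 0 < y) → (∀ c ∈ cs, 1 ≤ c) →
    (∀ i < ys.length, cs.getD i 0 ≤ Z + (ys.take i).sum) →
    parkAux (Z - 1 + ys.sum) (Ico 1 Z) cs ys = some (standardStarts Z ys)
  | _, [], [], _, _, _, _ => by simp [parkAux, standardStarts]
  | Z, c :: cs, y :: ys, hlen, hys, hcs, hbound => by
    obtain ⟨hcZ, htail⟩ := forall_getD_le_add_sum_take_cons_iff.1 hbound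
    have hc := hcs c List.mem_cons_self
    have hy := hys y List.mem_cons_self
    have hM : Z - 1 + (y :: ys).sum = Z + y - 1 + ys.sum := by rw [List.sum_cons]; omega
    have ih := parkAux_Ico_one_eq_standardStarts (Nat.succ_injective hlen)
      (fun y' hy' => hys y' (List.mem_cons_of_mem _ hy'))
      (fun c' hc' => hcs c' (List.mem_cons_of_mem _ hc')) htail
    rw [parkAux_Ico_one_cons cs ys hc hcZ hy (by omega), hM, ih]
    rfl

theorem forall_getD_le_of_parkAux_Ico_one_isSome : ∀ {Z : ℕ} {cs ys : List ℕ}, 1 ≤ Z →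
    (∀ y ∈ ys, 0 < y) → (∀ c ∈ cs, 1 ≤ c) → cs.Pairwise (· ≤ ·) →
    (parkAux (Z - 1 + ys.sum) (Ico 1 Z) cs ys).isSome →
    ∀ i < ys.length, cs.getD i 0 ≤ Z + (ys.take i).sum
  | _, _, [], _, _, _, _, _ => by simp
  | _, [], _ :: _, _, _, _, _, h => by simp [parkAux] at h
  | Z, c :: cs, y :: ys, hZ, hys, hcs, hsort, h => by
    have hc := hcs c List.mem_cons_self
    have hy := hys y List.mem_cons_self
    have hM : Z - 1 + (y :: ys).sum = Z + y - 1 + ys.sum := by rw [List.sum_cons]; omega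
    by_cases hcZ : c ≤ Z
    · rw [parkAux_Ico_one_cons cs ys hc hcZ hy (by omega), hM, Option.isSome_map] at h
      refine forall_getD_le_add_sum_take_cons_iff.2 ⟨hcZ, ?_⟩
      exact forall_getD_le_of_parkAux_Ico_one_isSome (by omega)
        (fun y' hy' => hys y' (List.mem_cons_of_mem _ hy'))
        (fun c' hc' => hcs c' (List.mem_cons_of_mem _ hc')) (List.pairwise_cons.1 hsort).2 h
    · have hlater : ∀ c' ∈ c :: cs, Z < c' := by
        simp only [List.mem_cons, forall_eq_or_imp]
        exact ⟨by omega, fun c' hc' => by have := (List.pairwise_cons.1 hsort).1 c' hc'; omega⟩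
      rw [parkAux_Ico_one_eq_none hZ (by rw [List.sum_cons]; omega) hlater] at h
      simp at h

theorem stmt2_general (n z : ℕ) (hz : 0 < z) (ys cs : List ℕ)
    (hylen : ys.length = n) (hypos : ∀ y ∈ ys, 0 < y)
    (hclen : cs.length = n) (hcpos : ∀ c ∈ cs, 1 ≤ c)
    (hsort : List.Pairwise (· ≤ ·) cs) :
    (IsParkingSeq ys cs z ↔ ∀ i < n, cs.getD i 0 ≤ z + (ys.take i).sum) ∧
    (IsParkingSeq ys cs z → ParksStandard ys cs z) := by
  subst hylen
  have hparks : (∀ i < ys.length, cs.getD i 0 ≤ z + (ys.take i).sum) →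
      ParksStandard ys cs z :=
    parkAux_Ico_one_eq_standardStarts hclen hypos hcpos
  have hiff : IsParkingSeq ys cs z ↔ ∀ i < ys.length, cs.getD i 0 ≤ z + (ys.take i).sum :=
    ⟨fun h => forall_getD_le_of_parkAux_Ico_one_isSome hz hypos hcpos hsort h.2.2,
      fun h => ⟨hclen, hcpos, by rw [hparks h]; rfl⟩⟩
  exact ⟨hiff, fun h => hparks (hiff.1 h)⟩

theorem stmt2 (n z : ℕ) (hn : 0 < n) (hz : 0 < z) (ys cs : List ℕ)
    (hylen : ys.length = n) (hypos : ∀ y ∈ ys, 0 < y)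
    (hclen : cs.length = n) (hcpos : ∀ c ∈ cs, 1 ≤ c)
    (hsort : List.Pairwise (· ≤ ·) cs) :
    (IsParkingSeq ys cs z ↔ ∀ i < n, cs.getD i 0 ≤ z + (ys.take i).sum) ∧
    (IsParkingSeq ys cs z → ParksStandard ys cs z) :=
  stmt2_general n z hz ys cs hylen hypos hclen hcpos hsort
end

section
/- Let y = (y_1 < y_2 < ... < y_n) be a strictly increasing length vector and z ∈ Z_+. Then the set of permutation-invariant parking sequences for (y;z) is exactly [z]^n, and hence its cardinality is z^n. -/
open Finset

/-!
Preferences `≤ z` are harmless: the trailer fills spots `1, …, z - 1`, so each such car takes the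
first free spot and the cars park bumper to bumper from `z` on. Conversely, let `c > z` be the
least preference exceeding `z`. When the car preferring `c` parks at `c` while `[1, a)` is filled,
the street has no spare spot and only cars preferring spots `≤ z` can reach the gap `[a, c)`;
they park consecutively from `a`, so a block of consecutive lengths sums to `c - a`. Letting `c`
enter first gives `y₂ + ⋯ + yₖ = c - z`; letting a car preferring a spot `≤ z` enter first and then
`c` gives `y₃ + ⋯ + yₘ = c - z - y₁`. Hence `yₖ₊₁ + ⋯ + yₘ = y₂ - y₁`, which lies strictly between
`0` and `y₂`, although each of these terms exceeds `y₂`.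
-/

section Parking

variable {M : ℕ}

theorem firstEmpty_eq_some_s7 {occ : Finset ℕ} {c j : ℕ} (hcj : c ≤ j) (hjM : j ≤ M)
    (hocc : ∀ i, c ≤ i → i < j → i ∈ occ) (hj : j ∉ occ) : firstEmpty occ M c = some j := by
  have hsplit : List.range' c (M + 1 - c) =
      List.range' c (j - c) ++ j :: List.range' (j + 1) (M - j) := by
    have hcj' : c + 1 * (j - c) = j := by omega
    rw [show M + 1 - c = (j - c) + (M - j + 1) by omega, ← List.range'_append, hcj',
      List.range'_succ]
  rw [firstEmpty, hsplit, List.find?_append, List.find?_cons_of_pos (by simpa using hj)]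
  rw [List.find?_eq_none.mpr fun i hi => by
    simp only [List.mem_range'_1] at hi
    simpa using hocc i hi.1 (by omega)]
  rfl

theorem mem_Icc_of_firstEmpty_eq_some {occ : Finset ℕ} {c j : ℕ}
    (h : firstEmpty occ M c = some j) : j ∈ Icc c M := by
  have := List.mem_of_find?_eq_some h
  rw [List.mem_range'_1] at this
  rw [mem_Icc]
  omega

theorem isSome_parkAux_cons_iff {occ : Finset ℕ} {c y : ℕ} {cs ys : List ℕ} :
    (parkAux M occ (c :: cs) (y :: ys)).isSome ↔ ∃ j, firstEmpty occ M c = some j ∧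
      (∀ i ∈ Ico j (j + y), i ∉ occ) ∧ j + y - 1 ≤ M ∧
      (parkAux M (occ ∪ Ico j (j + y)) cs ys).isSome := by
  rw [parkAux]
  cases firstEmpty occ M c with
  | none => simp
  | some j =>
    dsimp only
    simp only [Option.some.injEq, exists_eq_left']
    by_cases hfit : (∀ i ∈ Ico j (j + y), i ∉ occ) ∧ j + y - 1 ≤ M
    · rw [if_pos hfit, Option.isSome_map]
      exact ⟨fun h => ⟨hfit.1, hfit.2, h⟩, fun h => h.2.2⟩
    · rw [if_neg hfit]
      simp only [Option.isSome_none, Bool.false_eq_true, false_iff]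
      exact fun h => hfit ⟨h.1, h.2.1⟩

theorem parkAux_Ico_cons {k c y : ℕ} {cs ys : List ℕ} (hc : 1 ≤ c) (hck : c ≤ k) (hy : 0 < y)
    (hkM : k + y ≤ M + 1) :
    parkAux M (Ico 1 k) (c :: cs) (y :: ys) = (parkAux M (Ico 1 (k + y)) cs ys).map (k :: ·) := by
  have hfe : firstEmpty (Ico 1 k) M c = some k :=
    firstEmpty_eq_some_s7 hck (by omega) (fun i hi hik => by simp only [mem_Ico]; omega) (by simp)
  rw [parkAux, hfe]
  dsimp only
  rw [if_pos ⟨fun i hi => by simp only [mem_Ico] at hi ⊢; omega, by omega⟩,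
    Ico_union_Ico_eq_Ico (by omega) (by omega)]

theorem parkAux_Ico_eq_standardStarts {ys : List ℕ} (hys : ∀ y ∈ ys, 0 < y) :
    ∀ {k : ℕ} {cs : List ℕ}, 1 ≤ k → k + ys.sum = M + 1 → cs.length = ys.length →
      (∀ c ∈ cs, 1 ≤ c ∧ c ≤ k) → parkAux M (Ico 1 k) cs ys = some (standardStarts k ys) := by
  induction ys with
  | nil =>
    intro k cs _ _ hlen _
    rw [List.eq_nil_of_length_eq_zero hlen]
    rfl
  | cons y ys ih =>
    intro k cs hk hM hlen hcs
    obtain ⟨c, cs, rfl⟩ := List.exists_cons_of_length_eq_add_one hlen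
    have hy := hys y List.mem_cons_self
    have hc := hcs c List.mem_cons_self
    rw [List.sum_cons] at hM
    rw [parkAux_Ico_cons hc.1 hc.2 hy (by omega),
      ih (fun y hy => hys y (List.mem_cons_of_mem _ hy)) (by omega) (by omega)
        (by simpa using hlen) fun c' hc' => by
          have := hcs c' (List.mem_cons_of_mem _ hc')
          omega]
    rfl

theorem sum_le_card_sdiff_of_isSome_parkAux {b : ℕ} :
    ∀ {occ : Finset ℕ} {cs ys : List ℕ}, (parkAux M occ cs ys).isSome →
      (∀ p ∈ cs, b ≤ p) → ys.sum ≤ #(Ico b (M + 1) \ occ) := by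
  intro occ cs
  induction cs generalizing occ with
  | nil =>
    rintro (_ | _) h _
    · simp
    · simp [parkAux] at h
  | cons c cs ih =>
    rintro (_ | ⟨y, ys⟩) h hb
    · simp [parkAux] at h
    obtain ⟨j, hfe, hfree, hjM, hrest⟩ := isSome_parkAux_cons_iff.mp h
    have hcj := mem_Icc.mp (mem_Icc_of_firstEmpty_eq_some hfe)
    have hbc := hb c List.mem_cons_self
    have hsub : Ico j (j + y) ⊆ Ico b (M + 1) \ occ := fun i hi =>
      mem_sdiff.mpr ⟨by simp only [mem_Ico] at hi ⊢; omega, hfree i hi⟩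
    have hrec := ih hrest fun p hp => hb p (List.mem_cons_of_mem _ hp)
    rw [sdiff_union_distrib, ← Finset.sdiff_sdiff_left', card_sdiff_of_subset hsub,
      Nat.card_Ico] at hrec
    have := card_le_card hsub
    rw [Nat.card_Ico] at this
    rw [List.sum_cons]
    omega

/-- By `hsum` the street has no spare spot, so the gap `[a, c)` must be filled, and only the cars
of `S` can reach it. -/
theorem exists_prefix_sum_eq_of_isSome_parkAux {c T : ℕ} (hcT : c < T) (hTM : T ≤ M + 1)
    {B : List ℕ} (hB : ∀ p ∈ B, c ≤ p) :
    ∀ {S ys : List ℕ} {a : ℕ}, 1 ≤ a → a < c → (∀ p ∈ S, 1 ≤ p ∧ p ≤ a) →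
      (hsum : ys.sum = (c - a) + (M + 1 - T)) →
      (parkAux M (Ico 1 a ∪ Ico c T) (S ++ B) ys).isSome →
      ∃ P, P <+: ys ∧ P.length ≤ S.length ∧ P.sum = c - a := by
  intro S
  induction S with
  | nil =>
    intro ys a ha hac _ hsum hpark
    have hfree : Ico c (M + 1) \ (Ico 1 a ∪ Ico c T) = Ico T (M + 1) := by
      ext i
      simp only [mem_sdiff, mem_union, mem_Ico]
      omega
    have := sum_le_card_sdiff_of_isSome_parkAux hpark hB
    rw [hfree, Nat.card_Ico] at this
    omega
  | cons p S ih =>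
    rintro (_ | ⟨y, ys⟩) a ha hac hS hsum hpark
    · simp [parkAux] at hpark
    have hp := hS p List.mem_cons_self
    have hfe : firstEmpty (Ico 1 a ∪ Ico c T) M p = some a :=
      firstEmpty_eq_some_s7 hp.2 (by omega) (fun i hi hia => by simp only [mem_union, mem_Ico]; omega)
        (by simp only [mem_union, mem_Ico]; omega)
    obtain ⟨j, hj, hfit, -, hrest⟩ := isSome_parkAux_cons_iff.mp hpark
    obtain rfl : a = j := Option.some.inj (hfe.symm.trans hj)
    have hyc : a + y ≤ c := by
      by_contra hlt
      exact hfit c (by simp only [mem_Ico]; omega) (by simp only [mem_union, mem_Ico]; omega)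
    rw [List.sum_cons] at hsum
    rcases hyc.eq_or_lt with hyc | hyc
    · exact ⟨[y], by simp, by simp, by rw [List.sum_singleton]; omega⟩
    rw [show Ico 1 a ∪ Ico c T ∪ Ico a (a + y) = Ico 1 (a + y) ∪ Ico c T by
      ext i; simp only [mem_union, mem_Ico]; omega] at hrest
    obtain ⟨P, hP, hlen, hPsum⟩ := ih (by omega) hyc
      (fun q hq => by have := hS q (List.mem_cons_of_mem _ hq); omega) (by omega) hrest
    exact ⟨y :: P, List.cons_prefix_cons.mpr ⟨rfl, hP⟩, by simpa using hlen,
      by rw [List.sum_cons]; omega⟩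

theorem exists_prefix_sum_eq_of_isSome_parkAux_cons {a c y : ℕ} {S B ys : List ℕ}
    (ha : 1 ≤ a) (hac : a < c) (hy : 0 < y) (hM : a + y + ys.sum = M + 1)
    (hS : ∀ p ∈ S, 1 ≤ p ∧ p ≤ a) (hB : ∀ p ∈ B, c ≤ p)
    (hpark : (parkAux M (Ico 1 a) (c :: (S ++ B)) (y :: ys)).isSome) :
    ∃ P, P <+: ys ∧ P.length ≤ S.length ∧ P.sum = c - a := by
  obtain ⟨j, hj, -, hjM, hrest⟩ := isSome_parkAux_cons_iff.mp hpark
  have hcM := mem_Icc.mp (mem_Icc_of_firstEmpty_eq_some hj)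
  have hfe : firstEmpty (Ico 1 a) M c = some c :=
    firstEmpty_eq_some_s7 le_rfl (by omega) (fun i hci hic => by omega) (by simp only [mem_Ico]; omega)
  obtain rfl : c = j := Option.some.inj (hfe.symm.trans hj)
  exact exists_prefix_sum_eq_of_isSome_parkAux (by omega) (by omega) hB ha hac hS (by omega) hrest

end Parking

theorem add_lt_sum_of_isPrefix {P Q w : List ℕ} {d : ℕ} (hP : P <+: w) (hQ : Q <+: w)
    (hw : ∀ x ∈ w, d < x) (hlt : P.sum < Q.sum) : P.sum + d < Q.sum := by
  rcases List.prefix_or_prefix_of_prefix hP hQ with ⟨R, rfl⟩ | ⟨R, rfl⟩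
  · obtain _ | ⟨x, R⟩ := R
    · simp at hlt
    · have := hw x (hQ.subset (by simp))
      simp only [List.sum_append, List.sum_cons]
      omega
  · simp only [List.sum_append] at hlt
    omega

theorem exists_perm_cons_append {z : ℕ} {cs : List ℕ} (h : ∃ c ∈ cs, z < c) :
    ∃ c S B, (c :: (S ++ B)).Perm cs ∧ z < c ∧ (∀ p ∈ S, p ∈ cs ∧ p ≤ z) ∧ ∀ p ∈ B, c ≤ p := by
  classical
  obtain ⟨hc, hzc⟩ := Nat.find_spec h
  refine ⟨Nat.find h, (cs.erase (Nat.find h)).filter (· ≤ z),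
    (cs.erase (Nat.find h)).filter fun p => !decide (p ≤ z), ?_, hzc, ?_, ?_⟩
  · exact ((List.filter_append_perm _ _).cons _).trans (List.perm_cons_erase hc).symm
  · intro p hp
    simp only [List.mem_filter, decide_eq_true_eq] at hp
    exact ⟨List.mem_of_mem_erase hp.1, hp.2⟩
  · intro p hp
    simp only [List.mem_filter, Bool.not_eq_true', decide_eq_false_iff_not, not_le] at hp
    exact Nat.find_min' h ⟨List.mem_of_mem_erase hp.1, hp.2⟩

theorem le_of_permInvariant {z : ℕ} {ys cs : List ℕ} (hz : 0 < z) (hys : ∀ y ∈ ys, 0 < y)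
    (hinc : ys.Pairwise (· < ·)) (hcs : PermInvariant ys cs z) : ∀ c ∈ cs, c ≤ z := by
  by_contra! h
  obtain ⟨c, S, B, hperm, hzc, hS, hB⟩ := exists_perm_cons_append h
  obtain ⟨hlen, hpos, -⟩ := hcs cs (List.Perm.refl cs)
  have hS' : ∀ p ∈ S, 1 ≤ p ∧ p ≤ z := fun p hp => ⟨hpos p (hS p hp).1, (hS p hp).2⟩
  obtain _ | ⟨y₁, u⟩ := ys
  · simp [← hperm.length_eq] at hlen
  have hy₁ := hys y₁ List.mem_cons_self
  -- `c` enters first: the cars of `S` fill `[z, c)`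
  obtain ⟨P, hPu, hPS, hPsum⟩ := exists_prefix_sum_eq_of_isSome_parkAux_cons hz hzc hy₁
    (by simp only [List.sum_cons]; omega) hS' hB (hcs _ hperm).2.2
  have hP : P ≠ [] := by
    rintro rfl
    rw [List.sum_nil] at hPsum
    omega
  obtain ⟨y₂, P, rfl⟩ := List.exists_cons_of_ne_nil hP
  obtain _ | ⟨y₂', w⟩ := u
  · simp at hPu
  obtain ⟨rfl, hPw⟩ := List.cons_prefix_cons.mp hPu
  obtain _ | ⟨s, S⟩ := S
  · simp at hPS
  obtain ⟨hy₁₂, hw⟩ : y₁ < y₂ ∧ ∀ x ∈ w, y₂ < x := by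
    simp only [List.pairwise_cons, List.mem_cons, forall_eq_or_imp] at hinc
    exact ⟨hinc.1.1, hinc.2.1⟩
  -- `s` enters first and parks on `[z, z + y₁)`, then `c`: the rest of `S` fills `[z + y₁, c)`
  have hperm₂ : (s :: c :: (S ++ B)).Perm cs := (List.Perm.swap c s _).trans hperm
  have hpark₂ := (hcs _ hperm₂).2.2
  have hs := hS' s List.mem_cons_self
  rw [parkResult, parkAux_Ico_cons hs.1 hs.2 hy₁ (by simp only [List.sum_cons]; omega),
    Option.isSome_map] at hpark₂
  simp only [List.sum_cons] at hPsum
  obtain ⟨Q, hQw, -, hQsum⟩ := exists_prefix_sum_eq_of_isSome_parkAux_cons (by omega)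
    (by omega) (by omega) (by simp only [List.sum_cons]; omega)
    (fun p hp => by have := hS' p (List.mem_cons_of_mem _ hp); omega) hB hpark₂
  have := add_lt_sum_of_isPrefix hPw hQw hw (by omega)
  omega

theorem permInvariant_iff {z : ℕ} {ys cs : List ℕ} (hz : 0 < z) (hys : ∀ y ∈ ys, 0 < y)
    (hinc : ys.Pairwise (· < ·)) :
    PermInvariant ys cs z ↔ cs.length = ys.length ∧ ∀ c ∈ cs, 1 ≤ c ∧ c ≤ z := by
  refine ⟨fun hcs => ?_, fun ⟨hlen, hcs⟩ cs' hperm => ?_⟩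
  · obtain ⟨hlen, hpos, -⟩ := hcs cs (List.Perm.refl cs)
    exact ⟨hlen, fun c hc => ⟨hpos c hc, le_of_permInvariant hz hys hinc hcs c hc⟩⟩
  · have hcs' : ∀ c ∈ cs', 1 ≤ c ∧ c ≤ z := fun c hc => hcs c (hperm.mem_iff.mp hc)
    have hstd : ParksStandard ys cs' z :=
      parkAux_Ico_eq_standardStarts hys hz (by omega) (hperm.length_eq.trans hlen) hcs'
    exact ⟨hperm.length_eq.trans hlen, fun c hc => (hcs' c hc).1,
      Option.isSome_iff_exists.mpr ⟨_, hstd⟩⟩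

theorem ncard_setOf_length_eq_forall_mem_Icc (n z : ℕ) :
    {cs : List ℕ | cs.length = n ∧ ∀ c ∈ cs, 1 ≤ c ∧ c ≤ z}.ncard = z ^ n := by
  have hset : {cs : List ℕ | cs.length = n ∧ ∀ c ∈ cs, 1 ≤ c ∧ c ≤ z} =
      (Fintype.piFinset fun _ : Fin n => Icc 1 z).image List.ofFn := by
    ext cs
    simp only [Set.mem_ofPred_eq, coe_image, Set.mem_image, mem_coe, Fintype.mem_piFinset,
      mem_Icc]
    constructor
    · rintro ⟨rfl, hcs⟩
      exact ⟨fun i => cs[i], fun i => hcs _ (List.getElem_mem _), List.ofFn_getElem⟩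
    · rintro ⟨f, hf, rfl⟩
      exact ⟨List.length_ofFn, fun c hc => by
        obtain ⟨i, rfl⟩ := List.mem_ofFn.mp hc
        exact hf i⟩
  rw [hset, Set.ncard_coe_finset, card_image_of_injective _ List.ofFn_injective,
    Fintype.card_piFinset]
  simp

theorem stmt7_general (n z : ℕ) (hz : 0 < z) (ys : List ℕ)
    (hylen : ys.length = n) (hypos : ∀ y ∈ ys, 0 < y)
    (hinc : List.Pairwise (· < ·) ys) :
    {cs : List ℕ | PermInvariant ys cs z} =
      {cs : List ℕ | cs.length = n ∧ ∀ c ∈ cs, 1 ≤ c ∧ c ≤ z} ∧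
    {cs : List ℕ | PermInvariant ys cs z}.ncard = z ^ n := by
  have hset : {cs : List ℕ | PermInvariant ys cs z} =
      {cs : List ℕ | cs.length = n ∧ ∀ c ∈ cs, 1 ≤ c ∧ c ≤ z} := by
    ext cs
    exact (permInvariant_iff hz hypos hinc).trans (by rw [hylen]; rfl)
  exact ⟨hset, hset ▸ ncard_setOf_length_eq_forall_mem_Icc n z⟩

theorem stmt7 (n z : ℕ) (hn : 0 < n) (hz : 0 < z) (ys : List ℕ)
    (hylen : ys.length = n) (hypos : ∀ y ∈ ys, 0 < y)
    (hinc : List.Pairwise (· < ·) ys) :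
    {cs : List ℕ | PermInvariant ys cs z} =
      {cs : List ℕ | cs.length = n ∧ ∀ c ∈ cs, 1 ≤ c ∧ c ≤ z} ∧
    {cs : List ℕ | PermInvariant ys cs z}.ncard = z ^ n :=
  stmt7_general n z hz ys hylen hypos hinc
end

section
/- Let y = (k^n) with k ≥ 2 and z ∈ Z_+. The number of permutation-invariant parking sequences for (y;z) equals z(n+z)^{n-1}. -/
open Finset

/-!
Let the car with a preference `c > z` enter first. It parks on `[c, c + k)`, and the other
`n - 1` cars need all of the remaining `(n - 1) k` spots, so they tile both free stretches
`[z, c)` and `[c + k, z + n k)`; hence `k ∣ c - z`. With such aligned preferences the street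
behind the trailer is a row of `n` blocks of length `k`, a car preferring `c` takes the first
free block from block `⌊(c - z) / k⌋` on, and the cars behave like unit cars on `n` spots: they
all park, in every order, iff `#{i | t ≤ r_i} ≤ n - t` for all `t`. Relabelling
`z + s k ↦ z + s` turns these sequences into the `u`-parking functions for
`u = (z, …, z + n - 1)`. These are counted by Pollak's cycle argument: for
`f : Fin n → ZMod (n + z)` the excess `#{i | (f i).val < t} - t` drops by `z` per period, and
the translates of `f` that are parking functions match the `z` strict records of the excess in
one period.
-/

/-! ## The parking process -/

lemma firstEmpty_eq_none_iff {occ : Finset ℕ} {M c : ℕ} :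
    firstEmpty occ M c = none ↔ ∀ i, c ≤ i → i ≤ M → i ∈ occ := by
  simp only [firstEmpty, List.find?_eq_none, List.mem_range'_1, decide_eq_true_eq, not_not]
  exact forall_congr' fun i => ⟨fun h hc hM => h ⟨hc, by omega⟩, fun h hi => h hi.1 (by omega)⟩

lemma firstEmpty_eq_some_iff {occ : Finset ℕ} {M c j : ℕ} :
    firstEmpty occ M c = some j ↔
      c ≤ j ∧ j ≤ M ∧ j ∉ occ ∧ ∀ i, c ≤ i → i < j → i ∈ occ := by
  simp only [firstEmpty, List.find?_eq_some_iff_getElem, List.length_range',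
    List.getElem_range', decide_eq_true_eq, Bool.not_eq_true', decide_eq_false_iff_not, not_not]
  constructor
  · rintro ⟨hj, i, hi, rfl, hlt⟩
    refine ⟨by omega, by omega, hj, fun i' hci' hi' => ?_⟩
    simpa [Nat.add_sub_cancel' hci'] using hlt (i' - c) (by omega)
  · rintro ⟨hcj, hjM, hj, hlt⟩
    exact ⟨hj, j - c, by omega, by omega, fun i hi => hlt _ (by omega) (by omega)⟩

lemma parkAux_cons_isSome_iff {M : ℕ} {occ : Finset ℕ} {c y : ℕ} {cs ys : List ℕ} :
    (parkAux M occ (c :: cs) (y :: ys)).isSome ↔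
      ∃ j, firstEmpty occ M c = some j ∧ (∀ i ∈ Ico j (j + y), i ∉ occ) ∧ j + y - 1 ≤ M ∧
        (parkAux M (occ ∪ Ico j (j + y)) cs ys).isSome := by
  rw [parkAux]
  rcases firstEmpty occ M c with _ | j
  · simp
  · dsimp only
    split_ifs with h
    · simp only [Option.isSome_map, Option.some.injEq, exists_eq_left']
      exact ⟨fun hs => ⟨h.1, h.2, hs⟩, fun hs => hs.2.2⟩
    · simp only [Option.isSome_none, Bool.false_eq_true, false_iff, not_exists, not_and,
        Option.some.injEq]
      rintro _ rfl h1 h2 _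
      exact h ⟨h1, h2⟩

lemma exists_disjoint_blocks_of_parkAux_isSome {M k : ℕ} (hk : 0 < k) :
    ∀ {cs : List ℕ} {occ : Finset ℕ}, (∀ c ∈ cs, 1 ≤ c) →
      (parkAux M occ cs (List.replicate cs.length k)).isSome →
      ∃ T : Finset ℕ, #T = cs.length ∧
        (∀ a ∈ T, 1 ≤ a ∧ a + k ≤ M + 1 ∧ Disjoint (Ico a (a + k)) occ) ∧
        (T : Set ℕ).PairwiseDisjoint (fun a => Ico a (a + k))
  | [], _, _, _ => ⟨∅, by simp⟩
  | c :: cs, occ, hpos, h => by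
    rw [List.length_cons, List.replicate_succ, parkAux_cons_isSome_iff] at h
    obtain ⟨j, hj, hfree, hfit, hrest⟩ := h
    obtain ⟨T, hcard, hT, hdisj⟩ := exists_disjoint_blocks_of_parkAux_isSome hk
      (fun c' hc' => hpos c' (List.mem_cons_of_mem _ hc')) hrest
    have hjT : j ∉ T := fun hjT =>
      disjoint_left.1 (hT j hjT).2.2 (left_mem_Ico.2 (by omega))
        (mem_union_right _ (left_mem_Ico.2 (by omega)))
    refine ⟨insert j T, by rw [card_insert_of_notMem hjT, hcard, List.length_cons], ?_, ?_⟩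
    · intro a ha
      rcases mem_insert.1 ha with rfl | ha
      · have := hpos c List.mem_cons_self
        have := (firstEmpty_eq_some_iff.1 hj).1
        exact ⟨by omega, by omega, disjoint_left.2 hfree⟩
      · obtain ⟨h1, h2, h3⟩ := hT a ha
        exact ⟨h1, h2, disjoint_of_subset_right subset_union_left h3⟩
    · rw [coe_insert]
      exact hdisj.insert fun a ha _ =>
        (disjoint_of_subset_right subset_union_right (hT a ha).2.2).symm

lemma mul_card_le_of_pairwiseDisjoint {T : Finset ℕ} {k p q : ℕ}
    (hT : (T : Set ℕ).PairwiseDisjoint (fun a => Ico a (a + k)))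
    (hsub : ∀ a ∈ T, Ico a (a + k) ⊆ Ico p q) : k * #T ≤ q - p := by
  have := card_le_card (biUnion_subset.2 hsub)
  simpa only [card_biUnion hT, Nat.card_Ico, Nat.add_sub_cancel_left, sum_const, smul_eq_mul,
    mul_comm] using this

lemma dvd_sub_of_parkAux_isSome {n k z c : ℕ} (hk : 0 < k) (hz : 0 < z)
    (hcM : c + k ≤ z + n * k) {cs : List ℕ} (hlen : cs.length + 1 = n) (hpos : ∀ c' ∈ cs, 1 ≤ c')
    (h : (parkAux (z - 1 + n * k) (Ico 1 z ∪ Ico c (c + k)) cs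
      (List.replicate cs.length k)).isSome) : k ∣ c - z := by
  obtain ⟨T, hcard, hT, hdisj⟩ := exists_disjoint_blocks_of_parkAux_isSome hk hpos h
  have hbounds : ∀ a ∈ T, z ≤ a ∧ (a + k ≤ c ∨ c + k ≤ a) ∧ a + k ≤ z + n * k := by
    intro a ha
    obtain ⟨h1, h2, h3⟩ := hT a ha
    have hout : ∀ x, a ≤ x → x < a + k → ¬ ((1 ≤ x ∧ x < z) ∨ (c ≤ x ∧ x < c + k)) :=
      fun x hx1 hx2 => by simpa using disjoint_left.1 h3 (mem_Ico.2 ⟨hx1, hx2⟩)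
    have := hout a le_rfl (by omega)
    have := hout c
    omega
  have hleft : k * #{a ∈ T | a < c} ≤ c - z :=
    mul_card_le_of_pairwiseDisjoint (hdisj.subset (coe_subset.2 (filter_subset _ _)))
      fun a ha x hx => by
        have := hbounds a (mem_filter.1 ha).1
        have := (mem_filter.1 ha).2
        rw [mem_Ico] at hx ⊢
        omega
  have hright : k * #{a ∈ T | ¬ a < c} ≤ z + n * k - (c + k) :=
    mul_card_le_of_pairwiseDisjoint (hdisj.subset (coe_subset.2 (filter_subset _ _)))
      fun a ha x hx => by
        have := hbounds a (mem_filter.1 ha).1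
        have := (mem_filter.1 ha).2
        rw [mem_Ico] at hx ⊢
        omega
  have htotal : k * #{a ∈ T | a < c} + k * #{a ∈ T | ¬ a < c} + k = n * k := by
    rw [← mul_add, card_filter_add_card_filter_not, hcard, ← hlen]
    ring
  exact ⟨#{a ∈ T | a < c}, by omega⟩

def blockIdx (k z c : ℕ) : ℕ := (c - z) / k

-- `c - z` truncates to `0` for `c ≤ z`, so every preference `1 ≤ c ≤ z` is aligned.
def IsAligned (k z c : ℕ) : Prop := 1 ≤ c ∧ k ∣ c - z

lemma isAligned_of_parkAux_cons_isSome {k z c : ℕ} (hk : 0 < k) (hz : 0 < z) (hc : 1 ≤ c)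
    {cs : List ℕ} (hpos : ∀ c' ∈ cs, 1 ≤ c')
    (h : (parkAux (z - 1 + (cs.length + 1) * k) (Ico 1 z) (c :: cs)
      (List.replicate (cs.length + 1) k)).isSome) : IsAligned k z c := by
  refine ⟨hc, ?_⟩
  rcases le_or_gt c z with hcz | hzc
  · rw [Nat.sub_eq_zero_of_le hcz]
    exact dvd_zero k
  rw [List.replicate_succ, parkAux_cons_isSome_iff] at h
  obtain ⟨j, hj, -, hfit, hrest⟩ := h
  obtain ⟨hcj, -, -, hocc⟩ := firstEmpty_eq_some_iff.1 hj
  obtain rfl : j = c := by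
    by_contra hne
    have := mem_Ico.1 (hocc c le_rfl (by omega))
    omega
  exact dvd_sub_of_parkAux_isSome hk hz (by omega) rfl hpos hrest

/-! ## Aligned cars as unit cars on the blocks -/

def blockOcc (k z : ℕ) (S : Finset ℕ) : Finset ℕ :=
  Ico 1 z ∪ S.biUnion fun s => Ico (z + s * k) (z + s * k + k)

section Blocks

variable {k z : ℕ}

lemma mem_Ico_block_iff (hk : 0 < k) {s x : ℕ} :
    x ∈ Ico (z + s * k) (z + s * k + k) ↔ z ≤ x ∧ blockIdx k z x = s := by
  rw [mem_Ico, blockIdx, Nat.div_eq_iff hk]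
  omega

lemma mem_blockOcc (hk : 0 < k) {S : Finset ℕ} {x : ℕ} :
    x ∈ blockOcc k z S ↔ (1 ≤ x ∧ x < z) ∨ (z ≤ x ∧ blockIdx k z x ∈ S) := by
  simp only [blockOcc, mem_union, mem_Ico, mem_biUnion, mem_Ico_block_iff hk]
  aesop

lemma blockOcc_empty : blockOcc k z ∅ = Ico 1 z := by
  simp [blockOcc]

lemma blockOcc_insert (S : Finset ℕ) (t : ℕ) :
    blockOcc k z (insert t S) = blockOcc k z S ∪ Ico (z + t * k) (z + t * k + k) := by
  simp only [blockOcc, biUnion_insert]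
  ac_rfl

end Blocks

def freeAbove (n : ℕ) (S : Finset ℕ) (r : ℕ) : Finset ℕ := {t ∈ range n \ S | r ≤ t}

def UnitParks (n : ℕ) : Finset ℕ → List ℕ → Prop
  | _, [] => True
  | S, r :: rs => ∃ h : (freeAbove n S r).Nonempty,
      UnitParks n (insert ((freeAbove n S r).min' h) S) rs

def HallBound (n : ℕ) (S : Finset ℕ) (rs : List ℕ) : Prop :=
  ∀ t, rs.countP (t ≤ ·) + #{x ∈ S | t ≤ x} ≤ n - t

lemma card_filter_le_add_le_of_Ico_subset {S : Finset ℕ} {r t : ℕ} (hrt : r ≤ t)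
    (h : Ico r t ⊆ S) :
    #{x ∈ S | t ≤ x} + (t - r) ≤ #{x ∈ S | r ≤ x} := by
  have hdisj : Disjoint {x ∈ S | t ≤ x} (Ico r t) := disjoint_left.2 fun u hu hu' => by
    rw [mem_filter] at hu
    rw [mem_Ico] at hu'
    omega
  rw [← Nat.card_Ico, ← card_union_of_disjoint hdisj]
  exact card_le_card (union_subset (monotone_filter_right _ fun _ h => by omega)
    fun u hu => mem_filter.2 ⟨h hu, (mem_Ico.1 hu).1⟩)

lemma card_filter_le_insert {S : Finset ℕ} {t₀ : ℕ} (ht₀ : t₀ ∉ S) (t : ℕ) :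
    #{x ∈ insert t₀ S | t ≤ x} = #{x ∈ S | t ≤ x} + if t ≤ t₀ then 1 else 0 := by
  rw [filter_insert]
  split_ifs
  · exact card_insert_of_notMem fun h => ht₀ (mem_filter.1 h).1
  · rfl

section UnitParking

variable {n : ℕ} {S : Finset ℕ} {r : ℕ} {rs : List ℕ}

lemma mem_freeAbove {t : ℕ} : t ∈ freeAbove n S r ↔ t < n ∧ t ∉ S ∧ r ≤ t := by
  simp [freeAbove, and_assoc]

lemma hallBound_nil (hS : S ⊆ range n) : HallBound n S [] := fun t => by
  simpa using card_le_card (s := {x ∈ S | t ≤ x}) (t := Ico t n)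
    fun x hx => by simp_all [mem_Ico, mem_range.1 (hS (mem_filter.1 hx).1)]

lemma HallBound.lt_of_mem (h : HallBound n S rs) (hr : r ∈ rs) : r < n := by
  have := h r
  have : 0 < rs.countP (r ≤ ·) := List.countP_pos_iff.2 ⟨r, hr, decide_eq_true le_rfl⟩
  omega

lemma HallBound.perm {rs' : List ℕ} (h : HallBound n S rs) (hp : rs'.Perm rs) :
    HallBound n S rs' := fun t => (hp.countP_eq _).symm ▸ h t

lemma HallBound.freeAbove_nonempty (h : HallBound n S (r :: rs)) :
    (freeAbove n S r).Nonempty := by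
  by_contra hne
  have hsub : Ico r n ⊆ {x ∈ S | r ≤ x} := fun x hx => by
    rw [mem_Ico] at hx
    by_contra hxS
    exact hne ⟨x, mem_freeAbove.2 ⟨hx.2, fun h' => hxS (mem_filter.2 ⟨h', hx.1⟩), hx.1⟩⟩
  have := card_le_card hsub
  have := h r
  simp only [Nat.card_Ico, List.countP_cons, le_refl, decide_true, if_true] at *
  omega

lemma hallBound_cons_iff {t₀ : ℕ} (ht₀ : IsLeast (freeAbove n S r : Set ℕ) t₀) :
    HallBound n S (r :: rs) ↔ HallBound n (insert t₀ S) rs := by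
  obtain ⟨ht₀n, ht₀S, hrt₀⟩ := mem_freeAbove.1 ht₀.1
  simp only [HallBound, card_filter_le_insert ht₀S, List.countP_cons, decide_eq_true_eq]
  refine ⟨fun h t => ?_, fun h t => by have := h t; split_ifs at this ⊢ <;> omega⟩
  rcases le_or_gt t r with htr | hrt
  · have := h t
    simp only [htr, le_trans htr hrt₀, if_true] at this ⊢
    omega
  rcases le_or_gt t t₀ with htt₀ | ht₀t
  · -- All spots in `[r, t)` are taken, so the bound at `r` has room for the car at `t₀`.
    have hIco : Ico r t ⊆ S := fun u hu => by
      rw [mem_Ico] at hu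
      by_contra huS
      have := ht₀.2 (mem_freeAbove.2 ⟨by omega, huS, hu.1⟩)
      omega
    have := card_filter_le_add_le_of_Ico_subset hrt.le hIco
    have : rs.countP (t ≤ ·) ≤ rs.countP (r ≤ ·) :=
      List.countP_mono_left fun x _ hx => by
        simp only [decide_eq_true_eq] at hx ⊢
        omega
    have := h r
    simp only [le_refl, htt₀, if_true] at this ⊢
    omega
  · have := h t
    simp only [hrt.not_ge, ht₀t.not_ge, if_false] at this ⊢
    omega

lemma unitParks_iff_hallBound : ∀ {rs : List ℕ} {S : Finset ℕ}, S ⊆ range n →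
    (UnitParks n S rs ↔ HallBound n S rs)
  | [], _, hS => ⟨fun _ => hallBound_nil hS, fun _ => trivial⟩
  | r :: rs, S, hS => by
    have hstep : ∀ hne : (freeAbove n S r).Nonempty,
        UnitParks n (insert ((freeAbove n S r).min' hne) S) rs ↔ HallBound n S (r :: rs) :=
      fun hne => by
        have ht := isLeast_min' _ hne
        rw [hallBound_cons_iff ht, unitParks_iff_hallBound
          (insert_subset (mem_range.2 (mem_freeAbove.1 ht.1).1) hS)]
    exact ⟨fun ⟨hne, h⟩ => (hstep hne).1 h, fun h => ⟨h.freeAbove_nonempty, (hstep _).2 h⟩⟩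

end UnitParking

section BlockParking

variable {n k z : ℕ} {S : Finset ℕ} {c : ℕ}

lemma notMem_blockOcc_of_mem_Ico (hk : 0 < k) {t : ℕ} (ht : t ∉ S) :
    ∀ i ∈ Ico (z + t * k) (z + t * k + k), i ∉ blockOcc k z S := by
  intro i hi
  rw [mem_Ico_block_iff hk] at hi
  rw [mem_blockOcc hk]
  rintro (h | h)
  · omega
  · exact ht (hi.2 ▸ h.2)

lemma notMem_blockOcc (hk : 0 < k) (hc : 1 ≤ c) {i : ℕ} (hci : c ≤ i)
    (hi : i ∉ blockOcc k z S) :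
    z ≤ i ∧ blockIdx k z i ∉ S ∧ blockIdx k z c ≤ blockIdx k z i := by
  rw [mem_blockOcc hk] at hi
  have hzi : z ≤ i := by
    by_contra
    exact hi (Or.inl ⟨by omega, by omega⟩)
  exact ⟨hzi, fun hS => hi (Or.inr ⟨hzi, hS⟩),
    Nat.div_le_div_right (Nat.sub_le_sub_right hci z)⟩

lemma firstEmpty_blockOcc_eq_some (hk : 0 < k) (hc : IsAligned k z c) {t : ℕ}
    (ht : IsLeast (freeAbove n S (blockIdx k z c) : Set ℕ) t) :
    firstEmpty (blockOcc k z S) (z - 1 + n * k) c = some (z + t * k) := by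
  obtain ⟨htn, htS, hrt⟩ := mem_freeAbove.1 ht.1
  have hstart : c ≤ z + blockIdx k z c * k := by
    rw [blockIdx, Nat.div_mul_cancel hc.2]
    omega
  have hrt' := Nat.mul_le_mul_right k hrt
  have htn' : t * k + k ≤ n * k := by simpa [Nat.succ_mul] using Nat.mul_le_mul_right k htn
  refine firstEmpty_eq_some_iff.2 ⟨by omega, by omega,
    notMem_blockOcc_of_mem_Ico hk htS _ (left_mem_Ico.2 (by omega)), fun i hci hit => ?_⟩
  by_contra hi
  obtain ⟨hzi, hS, hr⟩ := notMem_blockOcc hk hc.1 hci hi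
  have hit' : blockIdx k z i < t := (Nat.div_lt_iff_lt_mul hk).2 (by omega)
  exact absurd (ht.2 (mem_freeAbove.2 ⟨by omega, hS, hr⟩)) (by omega)

lemma firstEmpty_blockOcc_eq_none (hk : 0 < k) (hz : 0 < z) (hc : 1 ≤ c)
    (h : freeAbove n S (blockIdx k z c) = ∅) :
    firstEmpty (blockOcc k z S) (z - 1 + n * k) c = none := by
  refine firstEmpty_eq_none_iff.2 fun i hci hiM => ?_
  by_contra hi
  obtain ⟨hzi, hS, hr⟩ := notMem_blockOcc hk hc hci hi
  have hin : blockIdx k z i < n := (Nat.div_lt_iff_lt_mul hk).2 (by omega)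
  simpa [h] using mem_freeAbove.2 ⟨hin, hS, hr⟩

end BlockParking

lemma parkAux_blockOcc_isSome_iff {n k z : ℕ} (hk : 0 < k) (hz : 0 < z) :
    ∀ {cs : List ℕ} {S : Finset ℕ}, S ⊆ range n → (∀ c ∈ cs, IsAligned k z c) →
      ((parkAux (z - 1 + n * k) (blockOcc k z S) cs (List.replicate cs.length k)).isSome ↔
        UnitParks n S (cs.map (blockIdx k z)))
  | [], _, _, _ => by simp [parkAux, UnitParks]
  | c :: cs, S, hS, hal => by
    have hc := hal c List.mem_cons_self
    have hal' := fun c' hc' => hal c' (List.mem_cons_of_mem c hc')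
    rw [List.length_cons, List.replicate_succ, parkAux_cons_isSome_iff, List.map_cons, UnitParks]
    by_cases hne : (freeAbove n S (blockIdx k z c)).Nonempty
    · have ht := isLeast_min' _ hne
      obtain ⟨htn, htS, -⟩ := mem_freeAbove.1 ht.1
      have hfit : z + (freeAbove n S (blockIdx k z c)).min' hne * k + k - 1 ≤ z - 1 + n * k := by
        have := Nat.mul_le_mul_right k htn
        rw [Nat.succ_mul] at this
        omega
      rw [firstEmpty_blockOcc_eq_some hk hc ht, exists_prop_of_true hne,
        ← parkAux_blockOcc_isSome_iff hk hz (insert_subset (mem_range.2 htn) hS) hal',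
        blockOcc_insert]
      simp only [Option.some.injEq, exists_eq_left', hfit, true_and]
      exact and_iff_right (notMem_blockOcc_of_mem_Ico hk htS)
    · rw [firstEmpty_blockOcc_eq_none hk hz hc.1 (not_nonempty_iff_eq_empty.1 hne)]
      simp [hne]

lemma isParkingSeq_replicate_iff {n k z : ℕ} (hk : 0 < k) (hz : 0 < z) {cs : List ℕ}
    (hlen : cs.length = n) (hal : ∀ c ∈ cs, IsAligned k z c) :
    IsParkingSeq (List.replicate n k) cs z ↔ HallBound n ∅ (cs.map (blockIdx k z)) := by
  rw [← unitParks_iff_hallBound (empty_subset _), ← parkAux_blockOcc_isSome_iff hk hz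
    (empty_subset _) hal, blockOcc_empty, IsParkingSeq, parkResult, List.sum_replicate,
    smul_eq_mul, List.length_replicate, hlen]
  exact ⟨fun h => h.2.2, fun h => ⟨rfl, fun c hc => (hal c hc).1, h⟩⟩

theorem permInvariant_replicate_iff {n k z : ℕ} (hk : 0 < k) (hz : 0 < z) {cs : List ℕ} :
    PermInvariant (List.replicate n k) cs z ↔
      cs.length = n ∧ (∀ c ∈ cs, IsAligned k z c) ∧ HallBound n ∅ (cs.map (blockIdx k z)) := by
  constructor
  · intro h
    obtain ⟨hlen, hpos, -⟩ := h cs (List.Perm.refl cs)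
    rw [List.length_replicate] at hlen
    have hal : ∀ c ∈ cs, IsAligned k z c := fun c hc => by
      obtain ⟨hlen', hpos', hpark⟩ := h _ (List.perm_cons_erase hc).symm
      rw [List.length_cons, List.length_replicate] at hlen'
      rw [parkResult, List.sum_replicate, smul_eq_mul, ← hlen'] at hpark
      exact isAligned_of_parkAux_cons_isSome hk hz (hpos c hc)
        (fun c' hc' => hpos' c' (List.mem_cons_of_mem c hc')) hpark
    exact ⟨hlen, hal, (isParkingSeq_replicate_iff hk hz hlen hal).1 (h cs (List.Perm.refl cs))⟩
  · rintro ⟨hlen, hal, hhall⟩ cs' hperm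
    have hal' : ∀ c ∈ cs', IsAligned k z c := fun c hc => hal c (hperm.mem_iff.1 hc)
    exact (isParkingSeq_replicate_iff hk hz (hperm.length_eq.trans hlen) hal').2
      (hhall.perm (hperm.map _))

/-! ## Pollak's cycle argument -/

def IsStrictRecord (G : ℕ → ℤ) (b : ℕ) : Prop := ∀ t < b, G b < G t

instance (G : ℕ → ℤ) : DecidablePred (IsStrictRecord G) := fun _ => Nat.decidableBallLT _ _

section Records

variable {G : ℕ → ℤ}

lemma isStrictRecord_shift_iff {m : ℕ} (hper : ∀ t, G (t + m) ≤ G t) {b : ℕ} (hb : b ≤ m) :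
    IsStrictRecord (fun s => G (b + s) - G b) m ↔ IsStrictRecord G (b + m) := by
  refine ⟨fun h t ht => ?_, fun h s hs => by simpa using h (b + s) (by omega)⟩
  rcases le_or_gt b t with hbt | htb
  · simpa [Nat.add_sub_cancel' hbt] using h (t - b) (by omega)
  · have := h (t + m - b) (by omega)
    dsimp only at this
    rw [Nat.add_sub_cancel' (by omega)] at this
    linarith [hper t]

/-- Steps of size at least `-1` cannot jump over `v`. -/
lemma find_le_eq_and_isStrictRecord (hstep : ∀ t, G t - 1 ≤ G (t + 1)) {v : ℤ}
    (hex : ∃ t, G t ≤ v) (h0 : v < G 0) :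
    G (Nat.find hex) = v ∧ IsStrictRecord G (Nat.find hex) := by
  have hpos : 0 < Nat.find hex := Nat.pos_of_ne_zero fun h => by
    have := Nat.find_spec hex
    rw [h] at this
    omega
  have hprev : ¬ G (Nat.find hex - 1) ≤ v := Nat.find_min hex (by omega)
  have hup := hstep (Nat.find hex - 1)
  rw [Nat.sub_add_cancel hpos] at hup
  have := Nat.find_spec hex
  refine ⟨by omega, fun t ht => ?_⟩
  have := Nat.find_min hex ht
  omega

/-- The strict records in `(m, 2m]` are the first visits of the values in `[μ - z, μ - 1]`,
where `μ` is the minimum of `G` on `[0, m]`. -/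
lemma card_isStrictRecord_Ioc {m z : ℕ} (hstep : ∀ t, G t - 1 ≤ G (t + 1))
    (hper : ∀ t, G (t + m) = G t - z) :
    #{b ∈ Ioc m (2 * m) | IsStrictRecord G b} = z := by
  obtain ⟨t₀, ht₀, hmin⟩ := exists_min_image (range (m + 1)) G ⟨0, by simp⟩
  rw [mem_range] at ht₀
  have hmin' : ∀ t ≤ m, G t₀ ≤ G t := fun t ht => hmin t (mem_range.2 (by omega))
  suffices #{b ∈ Ioc m (2 * m) | IsStrictRecord G b} = #(Icc (G t₀ - z) (G t₀ - 1)) by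
    rw [this, Int.card_Icc]
    omega
  refine card_nbij G (fun b hb => ?_) (fun b₁ hb₁ b₂ hb₂ h => ?_) (fun v hv => ?_)
  · simp only [coe_filter, mem_Ioc, Set.mem_ofPred_eq] at hb
    obtain ⟨⟨hmb, hb2m⟩, hrec⟩ := hb
    have hback := hper (b - m)
    rw [Nat.sub_add_cancel hmb.le] at hback
    have := hmin' (b - m) (by omega)
    have := hrec t₀ (by omega)
    simp only [coe_Icc, Set.mem_Icc]
    omega
  · simp only [coe_filter, Set.mem_ofPred_eq] at hb₁ hb₂
    rcases lt_trichotomy b₁ b₂ with hlt | heq | hlt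
    · exact absurd h (hb₂.2 b₁ hlt).ne'
    · exact heq
    · exact absurd h (hb₁.2 b₂ hlt).ne
  · simp only [coe_Icc, Set.mem_Icc] at hv
    have hex : ∃ t, G t ≤ v := ⟨t₀ + m, by rw [hper]; omega⟩
    obtain ⟨hGv, hrec⟩ := find_le_eq_and_isStrictRecord hstep hex (by linarith [hmin' 0 (by omega)])
    have hgt : m < Nat.find hex := by
      by_contra
      have := hmin' (Nat.find hex) (by omega)
      omega
    have hlast := Nat.find_min' hex (by rw [hper]; omega : G (t₀ + m) ≤ v)
    refine ⟨Nat.find hex, ?_, hGv⟩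
    simp only [coe_filter, mem_Ioc, Set.mem_ofPred_eq]
    exact ⟨⟨hgt, by omega⟩, hrec⟩

end Records

section Excess

variable {ι : Type*} [Fintype ι] {m : ℕ}

def countAt (f : ι → ZMod m) (j : ℕ) : ℕ := #{i | f i = j}

def excess (f : ι → ZMod m) (t : ℕ) : ℤ := ∑ j ∈ range t, (countAt f j : ℤ) - t

lemma countAt_add_modulus (f : ι → ZMod m) (j : ℕ) : countAt f (m + j) = countAt f j := by
  simp [countAt]

lemma excess_succ_ge (f : ι → ZMod m) (t : ℕ) : excess f t - 1 ≤ excess f (t + 1) := by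
  simp only [excess, sum_range_succ]
  push_cast
  linarith [(countAt f t).cast_nonneg (α := ℤ)]

variable [NeZero m]

lemma sum_countAt_range (f : ι → ZMod m) {s : ℕ} (hs : s ≤ m) :
    ∑ j ∈ range s, countAt f j = #{i | (f i).val < s} := by
  rw [card_eq_sum_card_fiberwise (f := fun i => (f i).val) (t := range s)
    fun i hi => mem_range.2 (mem_filter.1 hi).2]
  refine sum_congr rfl fun j hj => ?_
  rw [countAt, filter_filter]
  congr 1
  refine filter_congr fun i _ => ⟨fun h => ?_, fun h => ?_⟩
  · have hj' := mem_range.1 hj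
    have hv : (f i).val = j := by rw [h, ZMod.val_natCast_of_lt (by omega)]
    exact ⟨by simp only [hv]; exact hj', hv⟩
  · rw [← h.2, ZMod.natCast_zmod_val]

lemma excess_eq (f : ι → ZMod m) {s : ℕ} (hs : s ≤ m) :
    excess f s = #{i | (f i).val < s} - s := by
  rw [excess, ← sum_countAt_range f hs, Nat.cast_sum]

lemma excess_modulus (f : ι → ZMod m) : excess f m = Fintype.card ι - m := by
  rw [excess_eq f le_rfl]
  simp [ZMod.val_lt]

lemma excess_add_modulus (f : ι → ZMod m) (t : ℕ) :
    excess f (t + m) = excess f t + Fintype.card ι - m := by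
  have := excess_modulus f
  simp only [excess, add_comm t m, sum_range_add, countAt_add_modulus] at this ⊢
  push_cast
  linarith

lemma excess_add_const (f : ι → ZMod m) (a : ZMod m) (s : ℕ) :
    excess (fun i => f i + a) s = excess f (m - a.val + s) - excess f (m - a.val) := by
  have hcast : ((m - a.val : ℕ) : ZMod m) = -a := by
    rw [Nat.cast_sub (ZMod.val_lt a).le, ZMod.natCast_self, ZMod.natCast_zmod_val, zero_sub]
  have hcount : ∀ j, countAt (fun i => f i + a) j = countAt f (m - a.val + j) := fun j => by
    simp only [countAt, Nat.cast_add, hcast, ← eq_sub_iff_add_eq, neg_add_eq_sub]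
  simp only [excess, sum_range_add, hcount]
  push_cast
  ring

lemma card_translates_isStrictRecord (f : ι → ZMod m) (hι : Fintype.card ι ≤ m) :
    #{a : ZMod m | IsStrictRecord (excess fun i => f i + a) m} = m - Fintype.card ι := by
  have hper : ∀ t, excess f (t + m) = excess f t - (m - Fintype.card ι : ℕ) := fun t => by
    rw [excess_add_modulus, Nat.cast_sub hι]
    ring
  have hshift : ∀ a : ZMod m, IsStrictRecord (excess fun i => f i + a) m ↔
      IsStrictRecord (excess f) (m - a.val + m) := fun a => by
    rw [show (excess fun i => f i + a) = fun s => excess f (m - a.val + s) - excess f (m - a.val)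
      from funext (excess_add_const f a)]
    exact isStrictRecord_shift_iff (fun t => by rw [hper]; omega) (Nat.sub_le _ _)
  rw [← card_isStrictRecord_Ioc (excess_succ_ge f) hper]
  refine card_nbij (fun a => m - a.val + m) (fun a ha => ?_) (fun a₁ _ a₂ _ h => ?_)
    (fun b hb => ?_)
  · simp only [coe_filter, mem_univ, true_and, Set.mem_ofPred_eq, mem_Ioc] at ha ⊢
    exact ⟨⟨by have := ZMod.val_lt a; omega, by omega⟩, (hshift a).1 ha⟩
  · have := ZMod.val_lt a₁
    have := ZMod.val_lt a₂
    exact ZMod.val_injective m (by simp only at h; omega)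
  · simp only [coe_filter, mem_Ioc, Set.mem_ofPred_eq] at hb
    have hval : (((2 * m - b : ℕ) : ZMod m)).val = 2 * m - b := ZMod.val_natCast_of_lt (by omega)
    refine ⟨((2 * m - b : ℕ) : ZMod m), ?_, by simp only [hval]; omega⟩
    simp only [coe_filter, mem_univ, true_and, Set.mem_ofPred_eq]
    rw [hshift, hval, show m - (2 * m - b) + m = b by omega]
    exact hb.2

lemma card_isStrictRecord_excess_mul [DecidableEq ι] (hι : Fintype.card ι ≤ m) :
    #{f : ι → ZMod m | IsStrictRecord (excess f) m} * m =
      m ^ Fintype.card ι * (m - Fintype.card ι) := by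
  have htrans : ∀ a : ZMod m, #{f : ι → ZMod m | IsStrictRecord (excess fun i => f i + a) m} =
      #{f : ι → ZMod m | IsStrictRecord (excess f) m} := fun a =>
    card_nbij' (fun f i => f i + a) (fun f i => f i - a) (fun f hf => by simpa using hf)
      (fun f hf => by simpa using hf) (fun f _ => by simp) (fun f _ => by simp)
  calc #{f : ι → ZMod m | IsStrictRecord (excess f) m} * m
      = ∑ a : ZMod m, #{f : ι → ZMod m | IsStrictRecord (excess fun i => f i + a) m} := by
        rw [sum_congr rfl fun a _ => htrans a, sum_const, card_univ, ZMod.card, smul_eq_mul,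
          mul_comm]
    _ = ∑ f : ι → ZMod m, #{a : ZMod m | IsStrictRecord (excess fun i => f i + a) m} := by
        simp only [card_filter]
        exact sum_comm
    _ = m ^ Fintype.card ι * (m - Fintype.card ι) := by
        rw [sum_congr rfl fun f _ => card_translates_isStrictRecord f hι, sum_const, card_univ,
          Fintype.card_fun, ZMod.card, smul_eq_mul]

end Excess
/-! ## Relabelling -/

def expandPref (k z e : ℕ) : ℕ := if e ≤ z then e else z + (e - z) * k

def contractPref (k z c : ℕ) : ℕ := if c ≤ z then c else z + blockIdx k z c

section Relabel

variable {k z : ℕ}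

lemma blockIdx_expandPref (hk : 0 < k) (e : ℕ) : blockIdx k z (expandPref k z e) = e - z := by
  unfold expandPref blockIdx
  split_ifs with h
  · simp [Nat.sub_eq_zero_of_le h]
  · rw [Nat.add_sub_cancel_left, Nat.mul_div_cancel _ hk]

lemma isAligned_expandPref (hk : 0 < k) {e : ℕ} (he : 1 ≤ e) :
    IsAligned k z (expandPref k z e) := by
  unfold expandPref
  split_ifs with h
  · exact ⟨he, by rw [Nat.sub_eq_zero_of_le h]; exact dvd_zero k⟩
  · have := Nat.mul_le_mul_right k (by omega : 1 ≤ e - z)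
    exact ⟨by omega, by rw [Nat.add_sub_cancel_left]; exact dvd_mul_left k _⟩

lemma contractPref_expandPref (hk : 0 < k) (e : ℕ) : contractPref k z (expandPref k z e) = e := by
  by_cases h : e ≤ z
  · simp [expandPref, contractPref, h]
  · have := Nat.mul_le_mul_right k (by omega : 1 ≤ e - z)
    rw [contractPref, blockIdx_expandPref hk, expandPref, if_neg h, if_neg (by omega)]
    omega

lemma expandPref_contractPref {c : ℕ} (hc : IsAligned k z c) :
    expandPref k z (contractPref k z c) = c := by
  unfold contractPref
  split_ifs with h
  · simp [expandPref, h]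
  · have hdiv : blockIdx k z c * k = c - z := Nat.div_mul_cancel hc.2
    have hpos : 0 < blockIdx k z c := Nat.pos_of_ne_zero fun h0 => by rw [h0] at hdiv; omega
    rw [expandPref, if_neg (by omega), Nat.add_sub_cancel_left, hdiv]
    omega

lemma contractPref_le (c : ℕ) : contractPref k z c ≤ z + blockIdx k z c := by
  unfold contractPref
  split_ifs <;> omega

end Relabel

def decodePrefs (k z : ℕ) {n : ℕ} (f : Fin n → ZMod (n + z)) : List ℕ :=
  List.ofFn fun i => expandPref k z ((f i).val + 1)

lemma map_blockIdx_decodePrefs {n k z : ℕ} (hk : 0 < k) (f : Fin n → ZMod (n + z)) :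
    (decodePrefs k z f).map (blockIdx k z) = List.ofFn fun i => (f i).val + 1 - z := by
  simp [decodePrefs, List.map_ofFn, Function.comp_def, blockIdx_expandPref hk]

lemma decodePrefs_injective {n k z : ℕ} (hk : 0 < k) [NeZero (n + z)] :
    Function.Injective (decodePrefs k z (n := n)) := fun f g h => funext fun i => by
  have := congrArg (contractPref k z) (congrFun (List.ofFn_injective h) i)
  simp only [contractPref_expandPref hk, Nat.add_right_cancel_iff] at this
  exact ZMod.val_injective _ this

lemma List.countP_ofFn {n : ℕ} (g : Fin n → ℕ) (p : ℕ → Prop) [DecidablePred p] :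
    (List.ofFn g).countP (fun x => decide (p x)) = #{i | p (g i)} := by
  rw [← Multiset.coe_countP, ← Fin.univ_val_map, Multiset.countP_map]
  rfl

lemma hallBound_ofFn_iff {n z : ℕ} [NeZero (n + z)] (f : Fin n → ZMod (n + z)) :
    HallBound n ∅ (List.ofFn fun i => (f i).val + 1 - z) ↔ IsStrictRecord (excess f) (n + z) := by
  have hcompl : ∀ s, #{i | (f i).val < s} + #{i | s ≤ (f i).val} = n := fun s => by
    simpa [not_lt] using card_filter_add_card_filter_not (s := univ) fun i => (f i).val < s
  have hshift : ∀ t, 1 ≤ t → #{i | t ≤ (f i).val + 1 - z} = #{i | z + t - 1 ≤ (f i).val} :=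
    fun t ht => congrArg card (filter_congr fun i _ => by omega)
  simp only [HallBound, IsStrictRecord, List.countP_ofFn, filter_empty, card_empty, add_zero,
    excess_modulus, Fintype.card_fin]
  constructor
  · intro h s hs
    rw [excess_eq f hs.le]
    by_cases hsz : s < z
    · omega
    · have := h (s + 1 - z)
      rw [hshift _ (by omega), show z + (s + 1 - z) - 1 = s by omega] at this
      have := hcompl s
      omega
  · intro h t
    rcases Nat.eq_zero_or_pos t with rfl | ht
    · simp only [Nat.sub_zero]
      exact (card_le_univ _).trans_eq (Fintype.card_fin n)
    rw [hshift t ht]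
    by_cases hs : z + t - 1 < n + z
    · have := h _ hs
      rw [excess_eq f hs.le] at this
      have := hcompl (z + t - 1)
      omega
    · rw [card_eq_zero.2 (filter_eq_empty_iff.2 fun i _ => by have := ZMod.val_lt (f i); omega)]
      omega

lemma decodePrefs_contractPref {k z : ℕ} (hz : 0 < z) {cs : List ℕ}
    (hal : ∀ c ∈ cs, IsAligned k z c) (hhall : HallBound cs.length ∅ (cs.map (blockIdx k z))) :
    decodePrefs k z (fun i : Fin cs.length =>
      ((contractPref k z cs[(i : ℕ)] - 1 : ℕ) : ZMod (cs.length + z))) = cs := by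
  refine List.ext_getElem (by simp [decodePrefs]) fun j h₁ h₂ => ?_
  have hc := hal _ (List.getElem_mem h₂)
  have hpos : 1 ≤ contractPref k z cs[j] := by
    have := hc.1
    unfold contractPref
    split_ifs <;> omega
  have hlt : contractPref k z cs[j] - 1 < cs.length + z := by
    have := hhall.lt_of_mem (List.mem_map_of_mem (f := blockIdx k z) (List.getElem_mem h₂))
    have := contractPref_le (k := k) (z := z) cs[j]
    omega
  simp only [decodePrefs, List.getElem_ofFn, ZMod.val_natCast_of_lt hlt, Nat.sub_add_cancel hpos]
  exact expandPref_contractPref hc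

lemma setOf_permInvariant_eq_image {n k z : ℕ} (hk : 0 < k) (hz : 0 < z) :
    {cs : List ℕ | PermInvariant (List.replicate n k) cs z} =
      decodePrefs k z '' {f : Fin n → ZMod (n + z) | IsStrictRecord (excess f) (n + z)} := by
  have : NeZero (n + z) := ⟨by omega⟩
  ext cs
  simp only [Set.mem_ofPred_eq, Set.mem_image, permInvariant_replicate_iff hk hz]
  constructor
  · rintro ⟨rfl, hal, hhall⟩
    have hdec := decodePrefs_contractPref hz hal hhall
    refine ⟨_, ?_, hdec⟩
    rwa [← hallBound_ofFn_iff, ← map_blockIdx_decodePrefs hk, hdec]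
  · rintro ⟨f, hf, rfl⟩
    refine ⟨List.length_ofFn, fun c hc => ?_, ?_⟩
    · obtain ⟨i, rfl⟩ := List.mem_ofFn.1 hc
      exact isAligned_expandPref hk (by omega)
    · rwa [map_blockIdx_decodePrefs hk, hallBound_ofFn_iff]

theorem stmt9 (n k z : ℕ) (hn : 0 < n) (hk : 2 ≤ k) (hz : 0 < z) :
    {cs : List ℕ | PermInvariant (List.replicate n k) cs z}.ncard
      = z * (n + z) ^ (n - 1) := by
  have : NeZero (n + z) := ⟨by omega⟩
  have hcount := card_isStrictRecord_excess_mul (ι := Fin n) (m := n + z) (by simp)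
  have hpow : (n + z) ^ n = (n + z) ^ (n - 1) * (n + z) := by
    rw [← pow_succ, Nat.sub_add_cancel hn]
  rw [Fintype.card_fin, Nat.add_sub_cancel_left, hpow, mul_right_comm] at hcount
  rw [setOf_permInvariant_eq_image (by omega) hz,
    Set.ncard_image_of_injective _ (decodePrefs_injective (by omega)), Set.ncard_eq_toFinset_card',
    Set.toFinset_ofPred, Nat.eq_of_mul_eq_mul_right (by omega) hcount, mul_comm]
end
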